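/- Let f : ℝⁿ → ℝⁿ be locally Lipschitz, ρ : ℝⁿ → ℝ continuously differentiable, and φ : [0, T] → ℝⁿ a solution of φ'(t) = f(φ(t)). Suppose ∇ρ(x) · f(x) ≥ −λ₀ ρ(x) holds for all x = φ(t), t ∈ [0, T], for some constant λ₀, and ρ(φ(0)) > 0. Then ρ(φ(T)) ≥ e^{−λ₀ T} ρ(φ(0)) > 0. -/

import Mathlib

/-!
By the chain rule, `g t = ρ (φ t)` satisfies `g' ≥ -λ₀ g` on `[0, T]`, so `t ↦ exp (λ₀ t) g t`
has nonnegative derivative and is monotone; comparing its values at `0` and `T` is Grönwall's bound.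
-/

open Set

theorem HasGradientAt.comp_hasDerivAt {E : Type*} [NormedAddCommGroup E] [InnerProductSpace ℝ E]
    [CompleteSpace E] {ρ : E → ℝ} {ρ' : E} {φ : ℝ → E} {v : E} {t : ℝ}
    (hρ : HasGradientAt ρ ρ' (φ t)) (hφ : HasDerivAt φ v t) :
    HasDerivAt (fun s => ρ (φ s)) (inner ℝ ρ' v) t := by
  simpa [Function.comp_def] using hρ.hasFDerivAt.comp_hasDerivAt t hφ

theorem monotoneOn_exp_mul_of_deriv_ge {g g' : ℝ → ℝ} {a b lam : ℝ}
    (hg : ContinuousOn g (Icc a b)) (hg' : ∀ t ∈ Ioo a b, HasDerivAt g (g' t) t)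
    (hineq : ∀ t ∈ Ioo a b, -lam * g t ≤ g' t) :
    MonotoneOn (fun t => Real.exp (lam * t) * g t) (Icc a b) := by
  have hderiv : ∀ t ∈ Ioo a b, HasDerivAt (fun t => Real.exp (lam * t) * g t)
      (Real.exp (lam * t) * (lam * g t + g' t)) t := fun t ht =>
    (((hasDerivAt_id' t).const_mul lam).exp.mul (hg' t ht)).congr_deriv (by ring)
  refine monotoneOn_of_hasDerivWithinAt_nonneg
    (f' := fun t => Real.exp (lam * t) * (lam * g t + g' t)) (convex_Icc a b) ?_ ?_ ?_
  · exact (Real.continuous_exp.comp (continuous_const.mul continuous_id)).continuousOn.mul hg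
  · simp only [interior_Icc]
    exact fun t ht => (hderiv t ht).hasDerivWithinAt
  · simp only [interior_Icc]
    intro t ht
    have := hineq t ht
    exact mul_nonneg (Real.exp_pos _).le (by linarith)

theorem exp_mul_le_of_deriv_ge {g g' : ℝ → ℝ} {a b lam : ℝ} (hab : a ≤ b)
    (hg : ContinuousOn g (Icc a b)) (hg' : ∀ t ∈ Ioo a b, HasDerivAt g (g' t) t)
    (hineq : ∀ t ∈ Ioo a b, -lam * g t ≤ g' t) :
    Real.exp (-lam * (b - a)) * g a ≤ g b := by
  have hmono := monotoneOn_exp_mul_of_deriv_ge hg hg' hineq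
    (left_mem_Icc.2 hab) (right_mem_Icc.2 hab) hab
  calc Real.exp (-lam * (b - a)) * g a
      = Real.exp (-(lam * b)) * (Real.exp (lam * a) * g a) := by
        rw [← mul_assoc, ← Real.exp_add]; ring_nf
    _ ≤ Real.exp (-(lam * b)) * (Real.exp (lam * b) * g b) := by gcongr
    _ = g b := by rw [← mul_assoc, ← Real.exp_add, neg_add_cancel, Real.exp_zero, one_mul]

theorem stmt_8_general (n : ℕ) (f : EuclideanSpace ℝ (Fin n) → EuclideanSpace ℝ (Fin n))
    (ρ : EuclideanSpace ℝ (Fin n) → ℝ) (φ : ℝ → EuclideanSpace ℝ (Fin n))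
    (T lam0 : ℝ) (hT : 0 ≤ T)
    (hρ : ContDiff ℝ 1 ρ)
    (hφ : ∀ t ∈ Set.Icc 0 T, HasDerivAt φ (f (φ t)) t)
    (hineq : ∀ t ∈ Set.Icc 0 T,
      (inner ℝ (gradient ρ (φ t)) (f (φ t)) : ℝ) ≥ -lam0 * ρ (φ t))
    (h0 : ρ (φ 0) > 0) :
    ρ (φ T) ≥ Real.exp (-lam0 * T) * ρ (φ 0) ∧ ρ (φ T) > 0 := by
  have hderiv : ∀ t ∈ Icc 0 T,
      HasDerivAt (fun s => ρ (φ s)) (inner ℝ (gradient ρ (φ t)) (f (φ t))) t := fun t ht =>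
    ((hρ.differentiable one_ne_zero) (φ t)).hasGradientAt.comp_hasDerivAt (hφ t ht)
  have hbound : Real.exp (-lam0 * T) * ρ (φ 0) ≤ ρ (φ T) := by
    simpa using exp_mul_le_of_deriv_ge hT
      (fun t ht => (hderiv t ht).continuousAt.continuousWithinAt)
      (fun t ht => hderiv t (Ioo_subset_Icc_self ht))
      (fun t ht => hineq t (Ioo_subset_Icc_self ht))
  exact ⟨hbound, (mul_pos (Real.exp_pos _) h0).trans_le hbound⟩

theorem stmt_8 (n : ℕ) (f : EuclideanSpace ℝ (Fin n) → EuclideanSpace ℝ (Fin n))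
    (ρ : EuclideanSpace ℝ (Fin n) → ℝ) (φ : ℝ → EuclideanSpace ℝ (Fin n))
    (T lam0 : ℝ) (hT : 0 ≤ T)
    (hf : LocallyLipschitz f) (hρ : ContDiff ℝ 1 ρ)
    (hφ : ∀ t ∈ Set.Icc 0 T, HasDerivAt φ (f (φ t)) t)
    (hineq : ∀ t ∈ Set.Icc 0 T,
      (inner ℝ (gradient ρ (φ t)) (f (φ t)) : ℝ) ≥ -lam0 * ρ (φ t))
    (h0 : ρ (φ 0) > 0) :
    ρ (φ T) ≥ Real.exp (-lam0 * T) * ρ (φ 0) ∧ ρ (φ T) > 0 :=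
  stmt_8_general n f ρ φ T lam0 hT hρ hφ hineq h0
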